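/- Let X, Y be random variables with values in a Borel space (S,S), A a sub-sigma-field, and let {A_1,...,A_I} ⊂ A, {S_1,...,S_J} ⊂ S be finite partitions of Ω and S respectively. Then Σ_{i=1}^I Σ_{j=1}^J |P(A_i ∩ {X ∈ S_j}) − P(A_i)P(X ∈ S_j)| ≤ 4·P(X ≠ Y) + 2·beta(A, σ(Y); P). -/

import Mathlib

open MeasureTheory ProbabilityTheory Filter Set

/-- The absolute regularity (β-mixing) coefficient between two sub-σ-fields. -/
noncomputable def betaMix {Ω : Type*} {mΩ : MeasurableSpace Ω} (P : Measure Ω)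
    (𝓐 𝓑 : MeasurableSpace Ω) : ℝ :=
  sSup { x : ℝ | ∃ (I J : ℕ) (f : Fin I → Set Ω) (g : Fin J → Set Ω),
    (∀ i, MeasurableSet[𝓐] (f i)) ∧ (∀ j, MeasurableSet[𝓑] (g j)) ∧
    Pairwise (Function.onFun Disjoint f) ∧ (⋃ i, f i) = Set.univ ∧
    Pairwise (Function.onFun Disjoint g) ∧ (⋃ j, g j) = Set.univ ∧
    x = (1/2) * ∑ i, ∑ j,
      |(P (f i ∩ g j)).toReal - (P (f i)).toReal * (P (g j)).toReal| }

/-- The strong mixing (α) coefficient between two sub-σ-fields. -/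
noncomputable def alphaMix {Ω : Type*} {mΩ : MeasurableSpace Ω} (P : Measure Ω)
    (𝓐 𝓑 : MeasurableSpace Ω) : ℝ :=
  sSup { x : ℝ | ∃ (A B : Set Ω), MeasurableSet[𝓐] A ∧ MeasurableSet[𝓑] B ∧
    x = |(P (A ∩ B)).toReal - (P A).toReal * (P B).toReal| }

/-- β mixing coefficient of a two-sided sequence with gap `n`. -/
noncomputable def betaSeq {Ω E : Type*} {mΩ : MeasurableSpace Ω} [MeasurableSpace E]
    (X : ℤ → Ω → E) (n : ℕ) (P : Measure Ω) : ℝ :=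
  betaMix P (⨆ k : {k : ℤ // k ≤ 0}, MeasurableSpace.comap (X k) inferInstance)
            (⨆ k : {k : ℤ // (n : ℤ) ≤ k}, MeasurableSpace.comap (X k) inferInstance)

/-- α mixing coefficient of a two-sided sequence with gap `n`. -/
noncomputable def alphaSeq {Ω E : Type*} {mΩ : MeasurableSpace Ω} [MeasurableSpace E]
    (X : ℤ → Ω → E) (n : ℕ) (P : Measure Ω) : ℝ :=
  alphaMix P (⨆ k : {k : ℤ // k ≤ 0}, MeasurableSpace.comap (X k) inferInstance)
             (⨆ k : {k : ℤ // (n : ℤ) ≤ k}, MeasurableSpace.comap (X k) inferInstance)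

/-- Strict stationarity of a two-sided sequence. -/
def IsStationary' {Ω E : Type*} {mΩ : MeasurableSpace Ω} [MeasurableSpace E]
    (P : Measure Ω) (X : ℤ → Ω → E) : Prop :=
  ∀ j : ℤ, P.map (fun ω => fun k : ℤ => X (k + j) ω) = P.map (fun ω => fun k : ℤ => X k ω)


/-!
Write `Cⱼ = X⁻¹' Sⱼ` and `Bⱼ = Y⁻¹' Sⱼ`. Replacing `Cⱼ` by `Bⱼ` in a term of the sum changes it
by at most `P(Aᵢ ∩ (Cⱼ ∆ Bⱼ)) + P(Aᵢ) P(Cⱼ ∆ Bⱼ)`; summed over the partition `(Aᵢ)` this is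
`2 ∑ⱼ P(Cⱼ ∆ Bⱼ)`, and `∑ⱼ P(Cⱼ ∆ Bⱼ) ≤ 2 P(X ≠ Y)` because the sets `Cⱼ \ Bⱼ` (and likewise
`Bⱼ \ Cⱼ`) are disjoint subsets of `{X ≠ Y}`. The remaining sum, with `Bⱼ ∈ σ(Y)`, is one of the
sums in the supremum defining `β(𝓐, σ(Y))`.
-/

open Function
open scoped symmDiff

noncomputable def dependenceSum {Ω ι κ : Type*} {mΩ : MeasurableSpace Ω} [Fintype ι] [Fintype κ]
    (P : Measure Ω) (f : ι → Set Ω) (g : κ → Set Ω) : ℝ :=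
  ∑ i, ∑ j, |P.real (f i ∩ g j) - P.real (f i) * P.real (g j)|

section

variable {Ω ι κ : Type*} {mΩ : MeasurableSpace Ω} {P : Measure Ω} [Fintype ι] [Fintype κ]

lemma sum_measureReal_inter_of_partition [IsFiniteMeasure P] {f : ι → Set Ω}
    (hm : ∀ i, MeasurableSet (f i)) (hd : Pairwise (Disjoint on f)) (hc : ⋃ i, f i = univ)
    {B : Set Ω} (hB : MeasurableSet B) :
    ∑ i, P.real (f i ∩ B) = P.real B := by
  rw [← measureReal_iUnion_fintype (fun i j h ↦ (hd h).mono inter_subset_left inter_subset_left)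
    (fun i ↦ (hm i).inter hB), ← iUnion_inter, hc, univ_inter]

lemma sum_measureReal_of_partition [IsProbabilityMeasure P] {f : ι → Set Ω}
    (hm : ∀ i, MeasurableSet (f i)) (hd : Pairwise (Disjoint on f)) (hc : ⋃ i, f i = univ) :
    ∑ i, P.real (f i) = 1 := by
  simpa using sum_measureReal_inter_of_partition (P := P) hm hd hc MeasurableSet.univ

lemma sum_measureReal_le_of_disjoint_of_subset [IsFiniteMeasure P] {f : κ → Set Ω}
    (hm : ∀ j, MeasurableSet (f j)) (hd : Pairwise (Disjoint on f)) {D : Set Ω}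
    (hsub : ∀ j, f j ⊆ D) :
    ∑ j, P.real (f j) ≤ P.real D := by
  rw [← measureReal_iUnion_fintype hd hm]
  exact measureReal_mono (iUnion_subset hsub)

lemma abs_measureReal_sub_le_measureReal_symmDiff [IsFiniteMeasure P] (s t : Set Ω) :
    |P.real s - P.real t| ≤ P.real (s ∆ t) := by
  rw [abs_sub_le_iff]
  exact ⟨(le_measureReal_sdiff).trans (measureReal_mono le_sup_left),
    (le_measureReal_sdiff).trans (measureReal_mono le_sup_right)⟩

lemma sum_measureReal_preimage_sdiff_le [IsFiniteMeasure P] {S : Type*} [MeasurableSpace S]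
    {X Y : Ω → S} (hX : Measurable X) (hY : Measurable Y) {T : κ → Set S}
    (hT : ∀ j, MeasurableSet (T j)) (hTd : Pairwise (Disjoint on T)) :
    ∑ j, P.real (X ⁻¹' T j \ Y ⁻¹' T j) ≤ P.real {ω | X ω ≠ Y ω} := by
  refine sum_measureReal_le_of_disjoint_of_subset (fun j ↦ (hX (hT j)).diff (hY (hT j)))
    (fun j k h ↦ ((hTd h).preimage X).mono sdiff_subset sdiff_subset) ?_
  rintro j ω ⟨hXω, hYω⟩ hXY
  exact hYω (by rwa [mem_preimage, ← hXY])

lemma sum_measureReal_preimage_symmDiff_le [IsFiniteMeasure P] {S : Type*} [MeasurableSpace S]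
    {X Y : Ω → S} (hX : Measurable X) (hY : Measurable Y) {T : κ → Set S}
    (hT : ∀ j, MeasurableSet (T j)) (hTd : Pairwise (Disjoint on T)) :
    ∑ j, P.real ((X ⁻¹' T j) ∆ (Y ⁻¹' T j)) ≤ 2 * P.real {ω | X ω ≠ Y ω} := by
  have hYX : P.real {ω | Y ω ≠ X ω} = P.real {ω | X ω ≠ Y ω} := by simp only [ne_comm]
  rw [Finset.sum_congr rfl fun j _ ↦ measureReal_symmDiff_eq (hX (hT j)) (hY (hT j)),
    Finset.sum_add_distrib]
  linarith [sum_measureReal_preimage_sdiff_le (P := P) hX hY hT hTd,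
    sum_measureReal_preimage_sdiff_le (P := P) hY hX hT hTd]

variable [IsProbabilityMeasure P] {f : ι → Set Ω} (hm : ∀ i, MeasurableSet (f i))
  (hd : Pairwise (Disjoint on f)) (hc : ⋃ i, f i = univ)
include hm hd hc

lemma dependenceSum_le_add_symmDiff {g h : κ → Set Ω} (hg : ∀ j, MeasurableSet (g j))
    (hh : ∀ j, MeasurableSet (h j)) :
    dependenceSum P f g ≤ dependenceSum P f h + 2 * ∑ j, P.real (g j ∆ h j) := by
  have hterm : ∀ i j, |P.real (f i ∩ g j) - P.real (f i) * P.real (g j)|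
      ≤ P.real (f i ∩ (g j ∆ h j)) + |P.real (f i ∩ h j) - P.real (f i) * P.real (h j)|
        + P.real (f i) * P.real (g j ∆ h j) := by
    intro i j
    have hinter := abs_measureReal_sub_le_measureReal_symmDiff (P := P) (f i ∩ g j) (f i ∩ h j)
    have hmarg := abs_measureReal_sub_le_measureReal_symmDiff (P := P) (g j) (h j)
    rw [← inter_symmDiff_distrib_left] at hinter
    have hmarg' : |P.real (f i) * P.real (h j) - P.real (f i) * P.real (g j)|
        ≤ P.real (f i) * P.real (g j ∆ h j) := by
      rw [← mul_sub, abs_mul, abs_of_nonneg measureReal_nonneg, abs_sub_comm]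
      exact mul_le_mul_of_nonneg_left hmarg measureReal_nonneg
    linarith [abs_sub_le (P.real (f i ∩ g j)) (P.real (f i ∩ h j)) (P.real (f i) * P.real (g j)),
      abs_sub_le (P.real (f i ∩ h j)) (P.real (f i) * P.real (h j)) (P.real (f i) * P.real (g j))]
  have hjoint : ∑ i, ∑ j, P.real (f i ∩ (g j ∆ h j)) = ∑ j, P.real (g j ∆ h j) := by
    rw [Finset.sum_comm]
    exact Finset.sum_congr rfl fun j _ ↦
      sum_measureReal_inter_of_partition hm hd hc ((hg j).symmDiff (hh j))
  have hprod : ∑ i, ∑ j, P.real (f i) * P.real (g j ∆ h j) = ∑ j, P.real (g j ∆ h j) := by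
    rw [← Finset.sum_mul_sum, sum_measureReal_of_partition hm hd hc, one_mul]
  calc dependenceSum P f g
      ≤ ∑ i, ∑ j, (P.real (f i ∩ (g j ∆ h j))
          + |P.real (f i ∩ h j) - P.real (f i) * P.real (h j)|
          + P.real (f i) * P.real (g j ∆ h j)) :=
        Finset.sum_le_sum fun i _ ↦ Finset.sum_le_sum fun j _ ↦ hterm i j
    _ = _ := by
        simp only [Finset.sum_add_distrib, hjoint, hprod, dependenceSum]
        ring

lemma dependenceSum_le_two {g : κ → Set Ω} (hgm : ∀ j, MeasurableSet (g j))
    (hgd : Pairwise (Disjoint on g)) (hgc : ⋃ j, g j = univ) :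
    dependenceSum P f g ≤ 2 := by
  have hjoint : ∑ i, ∑ j, P.real (f i ∩ g j) = 1 := by
    simp_rw [inter_comm (f _), sum_measureReal_inter_of_partition hgm hgd hgc (hm _)]
    exact sum_measureReal_of_partition hm hd hc
  have hprod : ∑ i, ∑ j, P.real (f i) * P.real (g j) = 1 := by
    rw [← Finset.sum_mul_sum, sum_measureReal_of_partition hm hd hc,
      sum_measureReal_of_partition hgm hgd hgc, one_mul]
  calc dependenceSum P f g
      ≤ ∑ i, ∑ j, (P.real (f i ∩ g j) + P.real (f i) * P.real (g j)) := by
        refine Finset.sum_le_sum fun i _ ↦ Finset.sum_le_sum fun j _ ↦ ?_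
        refine (abs_sub _ _).trans_eq ?_
        rw [abs_of_nonneg measureReal_nonneg, abs_of_nonneg (by positivity)]
    _ = 2 := by
        simp only [Finset.sum_add_distrib, hjoint, hprod]
        norm_num

end

lemma dependenceSum_le_two_mul_betaMix {Ω : Type*} {mΩ : MeasurableSpace Ω} {P : Measure Ω}
    [IsProbabilityMeasure P] {𝓐 𝓑 : MeasurableSpace Ω} (h𝓐 : 𝓐 ≤ mΩ) (h𝓑 : 𝓑 ≤ mΩ)
    {I J : ℕ} {f : Fin I → Set Ω} {g : Fin J → Set Ω} (hfm : ∀ i, MeasurableSet[𝓐] (f i))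
    (hfd : Pairwise (Disjoint on f)) (hfc : ⋃ i, f i = univ) (hgm : ∀ j, MeasurableSet[𝓑] (g j))
    (hgd : Pairwise (Disjoint on g)) (hgc : ⋃ j, g j = univ) :
    dependenceSum P f g ≤ 2 * betaMix P 𝓐 𝓑 := by
  rw [betaMix, ← div_le_iff₀' two_pos]
  refine le_csSup ⟨1, ?_⟩ ⟨I, J, f, g, hfm, hgm, hfd, hfc, hgd, hgc, ?_⟩
  · rintro _ ⟨I, J, f, g, hfm, hgm, hfd, hfc, hgd, hgc, rfl⟩
    have := dependenceSum_le_two (P := P) (fun i ↦ h𝓐 _ (hfm i)) hfd hfc (fun j ↦ h𝓑 _ (hgm j))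
      hgd hgc
    simp only [dependenceSum, measureReal_def] at this
    linarith
  · simp only [dependenceSum, measureReal_def]
    ring

/-- Σᵢ Σⱼ |P(Aᵢ ∩ {X ∈ Sⱼ}) − P(Aᵢ)P(X ∈ Sⱼ)| ≤ 4 P(X≠Y) + 2 β(𝓐,σ(Y);P). -/
theorem stmt4 {Ω S : Type*} {mΩ : MeasurableSpace Ω} [MeasurableSpace S]
    (P : Measure Ω) [IsProbabilityMeasure P]
    (X Y : Ω → S) (hX : Measurable X) (hY : Measurable Y)
    (𝓐 : MeasurableSpace Ω) (h𝓐 : 𝓐 ≤ mΩ)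
    (I J : ℕ) (A : Fin I → Set Ω) (Sp : Fin J → Set S)
    (hA : ∀ i, MeasurableSet[𝓐] (A i)) (hAdisj : Pairwise (Function.onFun Disjoint A))
    (hAcover : (⋃ i, A i) = Set.univ)
    (hS : ∀ j, MeasurableSet (Sp j)) (hSdisj : Pairwise (Function.onFun Disjoint Sp))
    (hScover : (⋃ j, Sp j) = Set.univ) :
    ∑ i, ∑ j, |(P (A i ∩ X ⁻¹' Sp j)).toReal - (P (A i)).toReal * (P (X ⁻¹' Sp j)).toReal|
      ≤ 4 * (P {ω | X ω ≠ Y ω}).toReal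
        + 2 * betaMix P 𝓐 (MeasurableSpace.comap Y inferInstance) := by
  have hYcover : ⋃ j, Y ⁻¹' Sp j = univ := by rw [← preimage_iUnion, hScover, preimage_univ]
  change dependenceSum P A (fun j ↦ X ⁻¹' Sp j) ≤ 4 * P.real {ω | X ω ≠ Y ω} + _
  calc dependenceSum P A (fun j ↦ X ⁻¹' Sp j)
      ≤ dependenceSum P A (fun j ↦ Y ⁻¹' Sp j)
          + 2 * ∑ j, P.real ((X ⁻¹' Sp j) ∆ (Y ⁻¹' Sp j)) :=
        dependenceSum_le_add_symmDiff (fun i ↦ h𝓐 _ (hA i)) hAdisj hAcover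
          (fun j ↦ hX (hS j)) (fun j ↦ hY (hS j))
    _ ≤ 2 * betaMix P 𝓐 (MeasurableSpace.comap Y inferInstance)
          + 2 * (2 * P.real {ω | X ω ≠ Y ω}) := by
        gcongr
        · exact dependenceSum_le_two_mul_betaMix h𝓐 hY.comap_le hA hAdisj hAcover
            (fun j ↦ ⟨Sp j, hS j, rfl⟩) (fun j k h ↦ (hSdisj h).preimage Y) hYcover
        · exact sum_measureReal_preimage_symmDiff_le hX hY hS hSdisj
    _ = _ := by ring
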